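/- There exists a constant C > 0 (depending on L) such that every gauge field A on B satisfying (τA)(x) = 0 for all x ∈ B obeys ‖dA‖² ≥ C‖A‖², and likewise every gauge field A on B satisfying (τ⁰A)(x) = 0 for all x ∈ B obeys ‖dA‖² ≥ C‖A‖². -/

import Mathlib

open Finset

noncomputable section

/-- Points of the lattice `ℤ³`. -/
abbrev Pt : Type := Fin 3 → ℤ

/-- The standard unit vector `e_μ`. -/
def unitVec (μ : Fin 3) : Pt := fun i => if i = μ then 1 else 0

/-- Membership in the cube `B = {x : |x i| ≤ (L-1)/2}` (for odd `L`). -/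
def inCube (L : ℤ) (x : Pt) : Prop := ∀ i, |x i| ≤ (L - 1) / 2

/-- Shift a point by `k` steps in direction `μ`. -/
def shiftPt (z : Pt) (μ : Fin 3) (k : ℤ) : Pt := fun i => if i = μ then z i + k else z i

/-- The sum of the gauge field `A` along the straight lattice path from `z` to `z + t·e_μ`. -/
def seg (A : Pt → Pt → ℝ) (z : Pt) (μ : Fin 3) (t : ℤ) : ℝ :=
  if 0 ≤ t then ∑ j ∈ Finset.range t.toNat, A (shiftPt z μ (j : ℤ)) (shiftPt z μ ((j : ℤ) + 1))
  else ∑ j ∈ Finset.range (-t).toNat, A (shiftPt z μ (-(j : ℤ))) (shiftPt z μ (-(j : ℤ) - 1))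

/-- The field strength `dA` on the plaquette based at `x`, spanned by `e_μ, e_ν`. -/
def plaq (A : Pt → Pt → ℝ) (x : Pt) (μ ν : Fin 3) : ℝ :=
  A x (x + unitVec μ) + A (x + unitVec μ) (x + unitVec μ + unitVec ν)
    + A (x + unitVec μ + unitVec ν) (x + unitVec ν) + A (x + unitVec ν) x

/-- The corner of the rectilinear path `Γ^π_{yx}` reached after the first `m` coordinate
moves: coordinates `π 0, …, π (m-1)` are already at their final values. -/
def interPt (y x : Pt) (π : Equiv.Perm (Fin 3)) (m : ℕ) : Pt :=
  fun i => if ((π.symm i : Fin 3) : ℕ) < m then x i else y i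

/-- `A(Γ^π_{yx})`: the sum of `A` along the rectilinear path from `y` to `x` which moves
the coordinates to their final values in the order `π 0, π 1, π 2`. -/
def gammaSum (A : Pt → Pt → ℝ) (π : Equiv.Perm (Fin 3)) (y x : Pt) : ℝ :=
  ∑ m : Fin 3, seg A (interPt y x π (m : ℕ)) (π m) (x (π m) - y (π m))

/-- `(τ⁰A)(x) = A(Γ_{0x})`, for the identity ordering of coordinates. -/
def tau0 (A : Pt → Pt → ℝ) (x : Pt) : ℝ := gammaSum A 1 0 x

/-- `(τA)(x) = (1/6) Σ_π A(Γ^π_{0x})`, averaged over the `3! = 6` permutations. -/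
def tau (A : Pt → Pt → ℝ) (x : Pt) : ℝ :=
  (1 / 6) * ∑ π : Equiv.Perm (Fin 3), gammaSum A π 0 x

/-- The cube `B` as a finite set of lattice points. -/
def cubeFin (L : ℤ) : Finset Pt :=
  Fintype.piFinset fun _ : Fin 3 => Finset.Icc (-((L - 1) / 2)) ((L - 1) / 2)

/-- `‖A‖² = Σ_b A(b)²`, summed over the (unordered) nearest-neighbor bonds in `B`. -/
def bondNormSq (L : ℤ) (A : Pt → Pt → ℝ) : ℝ :=
  ∑ x ∈ cubeFin L, ∑ μ : Fin 3,
    if x + unitVec μ ∈ cubeFin L then (A x (x + unitVec μ)) ^ 2 else 0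

/-- `‖dA‖² = Σ_p dA(p)²`, summed over the plaquettes contained in `B`. -/
def curlNormSq (L : ℤ) (A : Pt → Pt → ℝ) : ℝ :=
  ∑ x ∈ cubeFin L, ∑ μ : Fin 3, ∑ ν : Fin 3,
    if μ < ν ∧ x + unitVec μ ∈ cubeFin L ∧ x + unitVec ν ∈ cubeFin L ∧
        x + unitVec μ + unitVec ν ∈ cubeFin L
    then (plaq A x μ ν) ^ 2 else 0

/-! If `dA = 0` on `B`, the circulation of `A` around every lattice rectangle in `B` vanishes
(discrete Stokes), so moving the endpoint of a rectilinear path `Γ^π_{0x}` across a bond changes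
`A(Γ^π_{0x})` by the value of `A` on that bond: `τA` and `τ⁰A` are discrete potentials of `A`.
Hence `dA = 0` together with `τA = 0` (or `τ⁰A = 0`) on `B` forces `A = 0` on the bonds of `B`.
So the kernel of `A ↦ (dA, τA|_B)`, a linear map into a finite-dimensional space, lies in the kernel
of `A ↦ A|_bonds`; the latter therefore factors through the former by a linear, hence bounded,
map, and its bound gives `C`. -/

theorem LinearMap.exists_comp_eq_of_ker_le {K V E F : Type*} [DivisionRing K] [AddCommGroup V]
    [Module K V] [AddCommGroup E] [Module K E] [AddCommGroup F] [Module K F] (Φ : V →ₗ[K] E)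
    (g : V →ₗ[K] F) (hker : LinearMap.ker Φ ≤ LinearMap.ker g) : ∃ h : E →ₗ[K] F, h ∘ₗ Φ = g := by
  obtain ⟨h, hh⟩ := IsSemisimpleModule.extension_property ((LinearMap.ker Φ).liftQ Φ le_rfl)
    (LinearMap.ker_eq_bot.mp ((LinearMap.ker Φ).ker_liftQ_eq_bot' Φ rfl))
    ((LinearMap.ker Φ).liftQ g hker)
  exact ⟨h, LinearMap.ext fun v => by simpa using congr($hh (Submodule.Quotient.mk v))⟩

theorem LinearMap.exists_norm_le_mul_norm_of_ker_le {V E F : Type*} [AddCommGroup V] [Module ℝ V]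
    [NormedAddCommGroup E] [NormedSpace ℝ E] [FiniteDimensional ℝ E]
    [NormedAddCommGroup F] [NormedSpace ℝ F]
    (Φ : V →ₗ[ℝ] E) (g : V →ₗ[ℝ] F) (hker : LinearMap.ker Φ ≤ LinearMap.ker g) :
    ∃ K : ℝ, 0 < K ∧ ∀ v, ‖g v‖ ≤ K * ‖Φ v‖ := by
  obtain ⟨h, rfl⟩ := Φ.exists_comp_eq_of_ker_le g hker
  let h' := LinearMap.toContinuousLinearMap h
  refine ⟨‖h'‖ + 1, by positivity, fun v => ?_⟩
  calc ‖h (Φ v)‖ = ‖h' (Φ v)‖ := rfl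
    _ ≤ ‖h'‖ * ‖Φ v‖ := h'.le_opNorm _
    _ ≤ (‖h'‖ + 1) * ‖Φ v‖ := by gcongr; linarith

lemma mem_cubeFin {L : ℤ} {x : Pt} :
    x ∈ cubeFin L ↔ ∀ i, -((L - 1) / 2) ≤ x i ∧ x i ≤ (L - 1) / 2 := by
  simp [cubeFin, Fintype.mem_piFinset]

lemma mem_cubeFin_of_between {L : ℤ} {a b w : Pt} (ha : a ∈ cubeFin L) (hb : b ∈ cubeFin L)
    (hw : ∀ i, min (a i) (b i) ≤ w i ∧ w i ≤ max (a i) (b i)) : w ∈ cubeFin L := by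
  rw [mem_cubeFin] at *
  intro i
  have := ha i; have := hb i; have := hw i
  omega

lemma add_unitVec_apply (x : Pt) (μ i : Fin 3) :
    (x + unitVec μ) i = if i = μ then x i + 1 else x i := by
  simp only [Pi.add_apply, unitVec]; split_ifs <;> ring

lemma add_unitVec_apply_self (x : Pt) (μ : Fin 3) : (x + unitVec μ) μ = x μ + 1 := by
  rw [add_unitVec_apply, if_pos rfl]

lemma add_unitVec_apply_of_ne (x : Pt) {μ i : Fin 3} (h : i ≠ μ) : (x + unitVec μ) i = x i := by
  rw [add_unitVec_apply, if_neg h]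

lemma shiftPt_zero (z : Pt) (μ : Fin 3) : shiftPt z μ 0 = z := by
  funext i; simp [shiftPt]

lemma shiftPt_add_one (z : Pt) (μ : Fin 3) (t : ℤ) :
    shiftPt z μ (t + 1) = shiftPt z μ t + unitVec μ := by
  funext i; simp only [shiftPt, add_unitVec_apply]; split_ifs <;> ring

lemma shiftPt_add_unitVec (z : Pt) (μ ν : Fin 3) (t : ℤ) :
    shiftPt (z + unitVec μ) ν t = shiftPt z ν t + unitVec μ := by
  funext i; simp only [shiftPt, add_unitVec_apply]; split_ifs <;> omega

lemma shiftPt_mem_cubeFin {L : ℤ} {z : Pt} {ν : Fin 3} {t j : ℤ} (hz : z ∈ cubeFin L)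
    (ht : shiftPt z ν t ∈ cubeFin L) (hj : min 0 t ≤ j ∧ j ≤ max 0 t) :
    shiftPt z ν j ∈ cubeFin L := by
  refine mem_cubeFin_of_between hz ht fun i => ?_
  simp only [shiftPt]
  split_ifs <;> omega

section Segments

variable {A : Pt → Pt → ℝ}

lemma seg_zero (z : Pt) (μ : Fin 3) : seg A z μ 0 = 0 := by
  simp [seg]

lemma seg_of_nonpos {t : ℤ} (ht : t ≤ 0) (z : Pt) (μ : Fin 3) :
    seg A z μ t = ∑ j ∈ Finset.range (-t).toNat,
      A (shiftPt z μ (-(j : ℤ))) (shiftPt z μ (-(j : ℤ) - 1)) := by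
  rcases eq_or_lt_of_le ht with rfl | ht
  · simp [seg]
  · rw [seg, if_neg (by omega)]

lemma seg_add_one (hA : ∀ x x', A x x' = - A x' x) (z : Pt) (μ : Fin 3) (t : ℤ) :
    seg A z μ (t + 1) = seg A z μ t + A (shiftPt z μ t) (shiftPt z μ (t + 1)) := by
  rcases le_or_gt 0 t with ht | ht
  · rw [seg, seg, if_pos (by omega), if_pos ht, show (t + 1).toNat = t.toNat + 1 by omega,
      Finset.sum_range_succ, Int.natCast_toNat_eq_self.mpr ht]
  · rw [seg_of_nonpos (by omega), seg_of_nonpos ht.le,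
      show (-t).toNat = (-(t + 1)).toNat + 1 by omega, Finset.sum_range_succ,
      show (((-(t + 1)).toNat : ℕ) : ℤ) = -(t + 1) by omega, neg_neg, add_sub_cancel_right,
      hA (shiftPt z μ (t + 1))]
    ring

end Segments

def IsFlat (L : ℤ) (A : Pt → Pt → ℝ) : Prop :=
  ∀ x (μ ν : Fin 3), x ∈ cubeFin L → x + unitVec μ ∈ cubeFin L → x + unitVec ν ∈ cubeFin L →
    x + unitVec μ + unitVec ν ∈ cubeFin L → plaq A x μ ν = 0

/-- For antisymmetric `A`, the circulation of `A` around the rectangle with corners `z`,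
`z + e_μ`, `z + e_μ + t e_ν`, `z + t e_ν`. -/
def rectCirc (A : Pt → Pt → ℝ) (z : Pt) (μ ν : Fin 3) (t : ℤ) : ℝ :=
  A z (z + unitVec μ) + seg A (z + unitVec μ) ν t - seg A z ν t
    - A (shiftPt z ν t) (shiftPt z ν t + unitVec μ)

lemma plaq_swap {A : Pt → Pt → ℝ} (hA : ∀ x x', A x x' = - A x' x) (x : Pt) (μ ν : Fin 3) :
    plaq A x ν μ = - plaq A x μ ν := by
  rw [plaq, plaq, add_right_comm x (unitVec ν) (unitVec μ)]
  linarith [hA x (x + unitVec ν), hA (x + unitVec ν) (x + unitVec μ + unitVec ν),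
    hA (x + unitVec μ + unitVec ν) (x + unitVec μ), hA (x + unitVec μ) x]

lemma isFlat_of_forall_lt {A : Pt → Pt → ℝ} {L : ℤ} (hA : ∀ x x', A x x' = - A x' x)
    (h : ∀ x (μ ν : Fin 3), μ < ν → x ∈ cubeFin L → x + unitVec μ ∈ cubeFin L →
      x + unitVec ν ∈ cubeFin L → x + unitVec μ + unitVec ν ∈ cubeFin L → plaq A x μ ν = 0) :
    IsFlat L A := by
  intro x μ ν hx hμ hν hμν
  rcases lt_trichotomy μ ν with hlt | rfl | hgt
  · exact h x μ ν hlt hx hμ hν hμν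
  · linarith [plaq_swap hA x μ μ]
  · rw [plaq_swap hA, h x ν μ hgt hx hν hμ (add_right_comm x (unitVec μ) (unitVec ν) ▸ hμν),
      neg_zero]

section Flat

variable {A : Pt → Pt → ℝ} {L : ℤ}

lemma rectCirc_add_one (hA : ∀ x x', A x x' = - A x' x) (z : Pt) (μ ν : Fin 3) (t : ℤ) :
    rectCirc A z μ ν (t + 1) = rectCirc A z μ ν t + plaq A (shiftPt z ν t) μ ν := by
  simp only [rectCirc, plaq, seg_add_one hA, shiftPt_add_unitVec, shiftPt_add_one,
    add_right_comm _ (unitVec ν) (unitVec μ)]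
  linarith [hA (shiftPt z ν t + unitVec μ + unitVec ν) (shiftPt z ν t + unitVec ν),
    hA (shiftPt z ν t + unitVec ν) (shiftPt z ν t)]

lemma rectCirc_eq_zero (hA : ∀ x x', A x x' = - A x' x) (hflat : IsFlat L A)
    {z : Pt} {μ ν : Fin 3} {t : ℤ} (hz : z ∈ cubeFin L) (hz' : z + unitVec μ ∈ cubeFin L)
    (hw : shiftPt z ν t ∈ cubeFin L) (hw' : shiftPt z ν t + unitVec μ ∈ cubeFin L) :
    rectCirc A z μ ν t = 0 := by
  rw [← shiftPt_add_unitVec] at hw'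
  have mem {j : ℤ} (hj : min 0 t ≤ j ∧ j ≤ max 0 t) :
      shiftPt z ν j ∈ cubeFin L ∧ shiftPt z ν j + unitVec μ ∈ cubeFin L :=
    ⟨shiftPt_mem_cubeFin hz hw hj,
      shiftPt_add_unitVec z μ ν j ▸ shiftPt_mem_cubeFin hz' hw' hj⟩
  have flat (j : ℤ) (h₀ : min 0 t ≤ j ∧ j ≤ max 0 t) (h₁ : min 0 t ≤ j + 1 ∧ j + 1 ≤ max 0 t) :
      plaq A (shiftPt z ν j) μ ν = 0 := by
    obtain ⟨m₀, m₀'⟩ := mem h₀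
    obtain ⟨m₁, m₁'⟩ := mem h₁
    rw [shiftPt_add_one] at m₁ m₁'
    exact hflat _ μ ν m₀ m₀' m₁ (add_right_comm _ (unitVec ν) (unitVec μ) ▸ m₁')
  suffices h : ∀ j, min 0 t ≤ j ∧ j ≤ max 0 t → rectCirc A z μ ν j = 0 from h t (by omega)
  intro j
  induction j using Int.inductionOn' (b := 0) with
  | zero => intro _; simp [rectCirc, seg_zero, shiftPt_zero]
  | succ k hk ih =>
    intro hk₁
    rw [rectCirc_add_one hA, ih (by omega), flat k (by omega) hk₁, add_zero]
  | pred k hk ih =>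
    intro hk₁
    have := rectCirc_add_one hA z μ ν (k - 1)
    rw [sub_add_cancel, ih (by omega), flat (k - 1) hk₁ (by omega)] at this
    linarith

end Flat

section Paths

variable (y x : Pt) (π : Equiv.Perm (Fin 3))

lemma interPt_three : interPt y x π 3 = x := by
  funext i; simp [interPt]

lemma interPt_succ (m : Fin 3) :
    interPt y x π (m + 1) = shiftPt (interPt y x π m) (π m) (x (π m) - y (π m)) := by
  funext i
  by_cases h : i = π m
  · subst h; simp [interPt, shiftPt]
  · have : ((π.symm i : Fin 3) : ℕ) ≠ m := fun hc => h (by rw [← Fin.ext hc, π.apply_symm_apply])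
    simp only [interPt, shiftPt, if_neg h]
    exact if_congr (by omega) rfl rfl

lemma interPt_add_unitVec_of_le {μ : Fin 3} {m : ℕ} (hm : m ≤ (π.symm μ : ℕ)) :
    interPt y (x + unitVec μ) π m = interPt y x π m := by
  funext i
  simp only [interPt, add_unitVec_apply]
  split_ifs with h₁ h₂ <;> first | rfl | (subst h₂; omega)

lemma interPt_add_unitVec_of_lt {μ : Fin 3} {m : ℕ} (hm : (π.symm μ : ℕ) < m) :
    interPt y (x + unitVec μ) π m = interPt y x π m + unitVec μ := by
  funext i
  simp only [interPt, add_unitVec_apply]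
  split_ifs <;> simp_all

variable {y x}

lemma interPt_mem_cubeFin {L : ℤ} (hy : y ∈ cubeFin L) (hx : x ∈ cubeFin L) (m : ℕ) :
    interPt y x π m ∈ cubeFin L := by
  refine mem_cubeFin_of_between hy hx fun i => ?_
  simp only [interPt]
  split_ifs <;> omega

end Paths

/-- After its `μ`-move, `Γ^π_{y,x+e_μ}` runs parallel to `Γ^π_{yx}`, shifted by `e_μ`; this is
the rung joining the two paths at corner `m` (zero before the move). -/
def rung (A : Pt → Pt → ℝ) (π : Equiv.Perm (Fin 3)) (y x : Pt) (μ : Fin 3) (m : ℕ) : ℝ :=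
  if ((π.symm μ : Fin 3) : ℕ) < m then A (interPt y x π m) (interPt y x π m + unitVec μ) else 0

section Gradient

variable {A : Pt → Pt → ℝ} {L : ℤ} (π : Equiv.Perm (Fin 3)) {y x : Pt} {μ : Fin 3}

lemma seg_interPt_add_unitVec (hA : ∀ x x', A x x' = - A x' x) (hflat : IsFlat L A)
    (hy : y ∈ cubeFin L) (hx : x ∈ cubeFin L) (hx' : x + unitVec μ ∈ cubeFin L) (m : Fin 3) :
    seg A (interPt y (x + unitVec μ) π m) (π m) ((x + unitVec μ) (π m) - y (π m))
        + rung A π y x μ m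
      = seg A (interPt y x π m) (π m) (x (π m) - y (π m)) + rung A π y x μ (m + 1) := by
  set k : ℕ := ((π.symm μ : Fin 3) : ℕ)
  set P := interPt y x π
  have hsucc : P (m + 1) = shiftPt (P m) (π m) (x (π m) - y (π m)) := interPt_succ y x π m
  rcases lt_trichotomy (m : ℕ) k with hm | hm | hm
  · have hμ : π m ≠ μ := fun h => by simp [k, ← h] at hm
    rw [interPt_add_unitVec_of_le y x π hm.le, add_unitVec_apply_of_ne x hμ,
      rung, if_neg (by omega), rung, if_neg (by omega)]
  · have hμ : π m = μ := by rw [show m = π.symm μ from Fin.ext hm, π.apply_symm_apply]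
    rw [interPt_add_unitVec_of_le y x π hm.le, rung, if_neg (by omega), rung, if_pos (by omega),
      ← hμ, add_unitVec_apply_self, show x (π m) + 1 - y (π m) = x (π m) - y (π m) + 1 by ring,
      seg_add_one hA, shiftPt_add_one, ← hsucc, add_zero]
  · have hμ : π m ≠ μ := fun h => by simp [k, ← h] at hm
    have mem (n : ℕ) : P n ∈ cubeFin L := interPt_mem_cubeFin π hy hx n
    have mem' (n : ℕ) (hn : k < n) : P n + unitVec μ ∈ cubeFin L :=
      interPt_add_unitVec_of_lt y x π hn ▸ interPt_mem_cubeFin π hy hx' n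
    have hrect := rectCirc_eq_zero hA hflat (mem m) (mem' m hm)
      (hsucc ▸ mem (m + 1)) (hsucc ▸ mem' (m + 1) (by omega))
    rw [rectCirc, ← hsucc] at hrect
    rw [interPt_add_unitVec_of_lt y x π hm, add_unitVec_apply_of_ne x hμ,
      rung, if_pos hm, rung, if_pos (by omega)]
    linarith

theorem gammaSum_add_unitVec (hA : ∀ x x', A x x' = - A x' x) (hflat : IsFlat L A)
    (hy : y ∈ cubeFin L) (hx : x ∈ cubeFin L) (hx' : x + unitVec μ ∈ cubeFin L) :
    gammaSum A π y (x + unitVec μ) = gammaSum A π y x + A x (x + unitVec μ) := by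
  have h₀ : rung A π y x μ 0 = 0 := if_neg (Nat.not_lt_zero _)
  have h₃ : rung A π y x μ 3 = A x (x + unitVec μ) := by
    rw [rung, if_pos (π.symm μ).isLt, interPt_three]
  have := seg_interPt_add_unitVec π hA hflat hy hx hx' 0
  have := seg_interPt_add_unitVec π hA hflat hy hx hx' 1
  have := seg_interPt_add_unitVec π hA hflat hy hx hx' 2
  rw [gammaSum, gammaSum, Fin.sum_univ_three, Fin.sum_univ_three]
  simp only [Fin.val_zero, Fin.val_one, Fin.val_two] at *
  linarith

end Gradient

lemma zero_mem_cubeFin {L : ℤ} {x : Pt} (hx : x ∈ cubeFin L) : (0 : Pt) ∈ cubeFin L := by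
  rw [mem_cubeFin] at *
  intro i
  have := hx i
  simp only [Pi.zero_apply]
  omega

lemma tau_add_unitVec {A : Pt → Pt → ℝ} {L : ℤ} (hA : ∀ x x', A x x' = - A x' x)
    (hflat : IsFlat L A) {x : Pt} {μ : Fin 3} (hx : x ∈ cubeFin L)
    (hx' : x + unitVec μ ∈ cubeFin L) :
    tau A (x + unitVec μ) = tau A x + A x (x + unitVec μ) := by
  simp only [tau, gammaSum_add_unitVec _ hA hflat (zero_mem_cubeFin hx) hx hx',
    Finset.sum_add_distrib, Finset.sum_const, Finset.card_univ, Fintype.card_perm]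
  norm_num
  ring

lemma tau0_add_unitVec {A : Pt → Pt → ℝ} {L : ℤ} (hA : ∀ x x', A x x' = - A x' x)
    (hflat : IsFlat L A) {x : Pt} {μ : Fin 3} (hx : x ∈ cubeFin L)
    (hx' : x + unitVec μ ∈ cubeFin L) :
    tau0 A (x + unitVec μ) = tau0 A x + A x (x + unitVec μ) :=
  gammaSum_add_unitVec 1 hA hflat (zero_mem_cubeFin hx) hx hx'

section Linearity

variable (c : ℝ) (A B : Pt → Pt → ℝ)

lemma seg_add (z : Pt) (μ : Fin 3) (t : ℤ) : seg (A + B) z μ t = seg A z μ t + seg B z μ t := by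
  unfold seg; split_ifs <;> simp [Finset.sum_add_distrib]

lemma seg_smul (z : Pt) (μ : Fin 3) (t : ℤ) : seg (c • A) z μ t = c * seg A z μ t := by
  unfold seg; split_ifs <;> simp [Finset.mul_sum]

lemma gammaSum_add (π : Equiv.Perm (Fin 3)) (y x : Pt) :
    gammaSum (A + B) π y x = gammaSum A π y x + gammaSum B π y x := by
  simp [gammaSum, seg_add, Finset.sum_add_distrib]

lemma gammaSum_smul (π : Equiv.Perm (Fin 3)) (y x : Pt) :
    gammaSum (c • A) π y x = c * gammaSum A π y x := by
  simp [gammaSum, seg_smul, Finset.mul_sum]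

lemma plaq_add (x : Pt) (μ ν : Fin 3) : plaq (A + B) x μ ν = plaq A x μ ν + plaq B x μ ν := by
  simp only [plaq, Pi.add_apply]; ring

lemma plaq_smul (x : Pt) (μ ν : Fin 3) : plaq (c • A) x μ ν = c * plaq A x μ ν := by
  simp only [plaq, Pi.smul_apply, smul_eq_mul]; ring

end Linearity

def tauLinearMap : (Pt → Pt → ℝ) →ₗ[ℝ] (Pt → ℝ) where
  toFun := tau
  map_add' A B := by
    funext x; simp only [tau, gammaSum_add, Finset.sum_add_distrib, Pi.add_apply]; ring
  map_smul' c A := by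
    funext x; simp only [tau, gammaSum_smul, ← Finset.mul_sum, Pi.smul_apply, smul_eq_mul,
      RingHom.id_apply]; ring

def tau0LinearMap : (Pt → Pt → ℝ) →ₗ[ℝ] (Pt → ℝ) where
  toFun := tau0
  map_add' A B := funext fun x => gammaSum_add A B 1 0 x
  map_smul' c A := funext fun x => gammaSum_smul c A 1 0 x

def antisymmFields (α : Type*) : Submodule ℝ (α → α → ℝ) where
  carrier := {A | ∀ x y, A x y = - A y x}
  add_mem' ha hb x y := by simp [ha x y, hb x y, add_comm]
  zero_mem' _ _ := by simp
  smul_mem' c A ha x y := by simp [ha x y]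

def bondIdx (L : ℤ) : Finset (Pt × Fin 3) :=
  (cubeFin L ×ˢ Finset.univ).filter fun b => b.1 + unitVec b.2 ∈ cubeFin L

def plaqIdx (L : ℤ) : Finset (Pt × Fin 3 × Fin 3) :=
  (cubeFin L ×ˢ Finset.univ ×ˢ Finset.univ).filter fun p =>
    p.2.1 < p.2.2 ∧ p.1 + unitVec p.2.1 ∈ cubeFin L ∧ p.1 + unitVec p.2.2 ∈ cubeFin L ∧
      p.1 + unitVec p.2.1 + unitVec p.2.2 ∈ cubeFin L

lemma bondNormSq_eq_sum (L : ℤ) (A : Pt → Pt → ℝ) :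
    bondNormSq L A = ∑ b ∈ bondIdx L, A b.1 (b.1 + unitVec b.2) ^ 2 := by
  rw [bondNormSq, bondIdx, Finset.sum_filter, Finset.sum_product]

lemma curlNormSq_eq_sum (L : ℤ) (A : Pt → Pt → ℝ) :
    curlNormSq L A = ∑ p ∈ plaqIdx L, plaq A p.1 p.2.1 p.2.2 ^ 2 := by
  simp only [curlNormSq, plaqIdx, Finset.sum_filter, Finset.sum_product]

def bondMap (L : ℤ) : (Pt → Pt → ℝ) →ₗ[ℝ] EuclideanSpace ℝ (bondIdx L) where
  toFun A := WithLp.toLp 2 fun b => A b.1.1 (b.1.1 + unitVec b.1.2)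
  map_add' _ _ := rfl
  map_smul' _ _ := rfl

def curlGaugeMap (L : ℤ) (T : (Pt → Pt → ℝ) →ₗ[ℝ] (Pt → ℝ)) :
    (Pt → Pt → ℝ) →ₗ[ℝ] EuclideanSpace ℝ (plaqIdx L ⊕ cubeFin L) where
  toFun A := WithLp.toLp 2 (Sum.elim (fun p => plaq A p.1.1 p.1.2.1 p.1.2.2) fun x => T A x.1)
  map_add' A B := by
    ext (p | x)
    · exact plaq_add A B _ _ _
    · simp
  map_smul' c A := by
    ext (p | x)
    · exact plaq_smul c A _ _ _
    · simp

lemma norm_bondMap_sq (L : ℤ) (A : Pt → Pt → ℝ) : ‖bondMap L A‖ ^ 2 = bondNormSq L A := by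
  rw [EuclideanSpace.real_norm_sq_eq, bondNormSq_eq_sum]
  exact Finset.sum_coe_sort (bondIdx L) fun b => A b.1 (b.1 + unitVec b.2) ^ 2

lemma bondNormSq_nonneg (L : ℤ) (A : Pt → Pt → ℝ) : 0 ≤ bondNormSq L A := by
  rw [← norm_bondMap_sq]; positivity

lemma norm_curlGaugeMap_sq (L : ℤ) (T : (Pt → Pt → ℝ) →ₗ[ℝ] (Pt → ℝ)) (A : Pt → Pt → ℝ) :
    ‖curlGaugeMap L T A‖ ^ 2 = curlNormSq L A + ∑ x ∈ cubeFin L, T A x ^ 2 := by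
  rw [EuclideanSpace.real_norm_sq_eq, Fintype.sum_sum_type, curlNormSq_eq_sum]
  exact congr_arg₂ (· + ·) (Finset.sum_coe_sort (plaqIdx L) fun p => plaq A p.1 p.2.1 p.2.2 ^ 2)
    (Finset.sum_coe_sort (cubeFin L) fun x => T A x ^ 2)

theorem exists_coercive_of_potential (L : ℤ) (T : (Pt → Pt → ℝ) →ₗ[ℝ] (Pt → ℝ))
    (hT : ∀ A, (∀ x x', A x x' = - A x' x) → IsFlat L A → ∀ x μ, x ∈ cubeFin L →
      x + unitVec μ ∈ cubeFin L → T A (x + unitVec μ) = T A x + A x (x + unitVec μ)) :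
    ∃ C : ℝ, 0 < C ∧ ∀ A : Pt → Pt → ℝ, (∀ x x', A x x' = - A x' x) →
      (∀ x ∈ cubeFin L, T A x = 0) → C * bondNormSq L A ≤ curlNormSq L A := by
  set V := antisymmFields Pt
  have hker : LinearMap.ker (curlGaugeMap L T ∘ₗ V.subtype)
      ≤ LinearMap.ker (bondMap L ∘ₗ V.subtype) := by
    rintro ⟨A, hA⟩ hv
    have hzero (i) : curlGaugeMap L T A i = 0 := congr(WithLp.ofLp $hv i)
    have hflat : IsFlat L A := isFlat_of_forall_lt hA fun x μ ν hlt hx hμ hν hμν =>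
      hzero (Sum.inl ⟨(x, μ, ν), by simp [plaqIdx, hx, hlt, hμ, hν, hμν]⟩)
    have hT0 (x) (hx : x ∈ cubeFin L) : T A x = 0 := hzero (Sum.inr ⟨x, hx⟩)
    refine PiLp.ext fun ⟨(x, μ), hb⟩ => ?_
    obtain ⟨hx, hx'⟩ : x ∈ cubeFin L ∧ x + unitVec μ ∈ cubeFin L := by simpa [bondIdx] using hb
    have := hT A hA hflat x μ hx hx'
    rw [hT0 x hx, hT0 _ hx'] at this
    show A x (x + unitVec μ) = 0
    linarith
  obtain ⟨K, hK, hbound⟩ := LinearMap.exists_norm_le_mul_norm_of_ker_le _ _ hker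
  refine ⟨(K ^ 2)⁻¹, by positivity, fun A hA hTA => ?_⟩
  calc (K ^ 2)⁻¹ * bondNormSq L A = (K⁻¹ * ‖bondMap L A‖) ^ 2 := by
        rw [← norm_bondMap_sq]; ring
    _ ≤ ‖curlGaugeMap L T A‖ ^ 2 := by
        gcongr; rw [inv_mul_le_iff₀ hK]; exact hbound ⟨A, hA⟩
    _ = curlNormSq L A := by
        rw [norm_curlGaugeMap_sq, Finset.sum_eq_zero fun x hx => by simp [hTA x hx], add_zero]

theorem gauge_fixed_coercivity_general (L : ℤ) :
    ∃ C : ℝ, 0 < C ∧ ∀ A : Pt → Pt → ℝ, (∀ x x', A x x' = - A x' x) →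
      ((∀ x ∈ cubeFin L, tau A x = 0) → C * bondNormSq L A ≤ curlNormSq L A) ∧
      ((∀ x ∈ cubeFin L, tau0 A x = 0) → C * bondNormSq L A ≤ curlNormSq L A) := by
  obtain ⟨C, hC, hτ⟩ := exists_coercive_of_potential L tauLinearMap
    fun _ hA hflat _ _ hx hx' => tau_add_unitVec hA hflat hx hx'
  obtain ⟨C₀, hC₀, hτ₀⟩ := exists_coercive_of_potential L tau0LinearMap
    fun _ hA hflat _ _ hx hx' => tau0_add_unitVec hA hflat hx hx'
  refine ⟨min C C₀, lt_min hC hC₀, fun A hA => ⟨fun h => ?_, fun h => ?_⟩⟩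
  · exact (mul_le_mul_of_nonneg_right (min_le_left _ _) (bondNormSq_nonneg L A)).trans (hτ A hA h)
  · exact (mul_le_mul_of_nonneg_right (min_le_right _ _) (bondNormSq_nonneg L A)).trans (hτ₀ A hA h)

/-- There is a constant `C > 0` (depending on `L`) such that every gauge
field `A` on `B` with `τA = 0` on `B` satisfies `‖dA‖² ≥ C‖A‖²`, and likewise every gauge
field with `τ⁰A = 0` on `B` satisfies `‖dA‖² ≥ C‖A‖²`. -/
theorem gauge_fixed_coercivity (L : ℤ) (hL3 : 3 ≤ L) (hLodd : Odd L) :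
    ∃ C : ℝ, 0 < C ∧ ∀ A : Pt → Pt → ℝ, (∀ x x', A x x' = - A x' x) →
      ((∀ x ∈ cubeFin L, tau A x = 0) → C * bondNormSq L A ≤ curlNormSq L A) ∧
      ((∀ x ∈ cubeFin L, tau0 A x = 0) → C * bondNormSq L A ≤ curlNormSq L A) :=
  gauge_fixed_coercivity_general L
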